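/- arXiv:2104.03999 — 3 statements merged into one kernel-verified Lean document; each statement's English description precedes it below -/
import Mathlib

section
/- The space of continuous Lebesgue measure preserving maps of the unit circle, equipped with the uniform metric, is a complete metric space. -/
open MeasureTheory Filter Topology

/-- The space of continuous Lebesgue (Haar) measure preserving maps of the circle,
viewed as a subset of the complete metric space `C(S¹, S¹)` with the uniform metric,
is a complete (closed under Cauchy limits) set; hence a complete metric space. -/
theorem stmt0_complete_space_of_measure_preserving_circle_maps :
    IsComplete {f : C(UnitAddCircle, UnitAddCircle) |
      MeasurePreserving f (volume : Measure UnitAddCircle) volume} := by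
  have hc : IsClosed {f : C(UnitAddCircle, UnitAddCircle) |
      MeasurePreserving f (volume : Measure UnitAddCircle) volume} := by
    apply IsSeqClosed.isClosed
    intro F f hF hf
    refine ⟨(map_continuous f).measurable, ?_⟩
    haveI : IsFiniteMeasure ((volume : Measure UnitAddCircle).map f) :=
      Measure.isFiniteMeasure_map _ _
    apply ext_of_forall_lintegral_eq_of_IsFiniteMeasure
    intro φ
    rw [lintegral_map (by fun_prop) (map_continuous f).measurable]
    have hpt : ∀ x, Tendsto (fun n => (F n) x) atTop (𝓝 (f x)) := fun x =>
      ((continuous_eval_const x).continuousAt.tendsto).comp hf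
    have key : Tendsto (fun n => ∫⁻ x, (φ ((F n) x) : ENNReal) ∂volume) atTop
        (𝓝 (∫⁻ x, (φ (f x) : ENNReal) ∂volume)) := by
      apply tendsto_lintegral_of_dominated_convergence (fun _ => (nndist φ 0 : ENNReal))
      · intro n; fun_prop
      · intro n
        filter_upwards with x
        exact_mod_cast BoundedContinuousFunction.NNReal.upper_bound φ ((F n) x)
      · simp only [lintegral_const, measure_univ, mul_one]
        exact ENNReal.mul_ne_top ENNReal.coe_ne_top (measure_ne_top _ _)
      · filter_upwards with x
        exact (ENNReal.continuous_coe.tendsto _).comp ((φ.continuous.tendsto _).comp (hpt x))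
    have hconst : ∀ n, ∫⁻ x, (φ ((F n) x) : ENNReal) ∂volume
        = ∫⁻ x, (φ x : ENNReal) ∂volume := by
      intro n
      exact (hF n).lintegral_comp (f := fun x => (φ x : ENNReal)) (by fun_prop)
    simp_rw [hconst] at key
    exact (tendsto_nhds_unique tendsto_const_nhds key).symm
  exact hc.isComplete
end

section
/- Let F : [0,1) → [0,1) be a surjective piecewise affine map with nonzero slopes (not necessarily measure preserving), and define h : [0,1] → [0,1] by h(0) = 0, h(x) = λ(F⁻¹((0,x))) for x ∈ (0,1]. Then G = h ∘ F preserves Lebesgue measure: λ(A) = λ(G⁻¹(A)) for every Borel set A ⊆ [0,1). -/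
open MeasureTheory Set Filter Topology ProbabilityTheory

/-!
Let `ν` be the push-forward of Lebesgue measure on `[0,1)` under `F`. It is a probability measure
without atoms, since each affine piece of `F` meets a fibre in at most one point, and since `F`
maps `[0,1)` into itself, `h` coincides with the distribution function of `ν` on `[0,1)`.
The theorem is then the probability integral transform: an atomless law pushed forward by its
own (continuous) distribution function is uniform on `[0,1)`.
-/

theorem IsClosed.eq_Iic_csSup_of_isLowerSet {α : Type*} [ConditionallyCompleteLinearOrder α]
    [TopologicalSpace α] [OrderTopology α] {s : Set α} (hc : IsClosed s)
    (hl : IsLowerSet s) (hne : s.Nonempty) (hbdd : BddAbove s) : s = Iic (sSup s) :=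
  Subset.antisymm (fun _ hy => le_csSup hbdd hy) (fun _ hy => hl hy (hc.csSup_mem hne hbdd))

theorem Ico_subset_iUnion_Ico_succ {α : Type*} [LinearOrder α] (t : ℕ → α) :
    ∀ n : ℕ, Ico (t 0) (t n) ⊆ ⋃ i : Fin n, Ico (t i) (t (i + 1))
  | 0 => by simp
  | n + 1 => by
    intro x hx
    rcases lt_or_ge x (t n) with hxn | hxn
    · obtain ⟨i, hi⟩ := mem_iUnion.mp (Ico_subset_iUnion_Ico_succ t n ⟨hx.1, hxn⟩)
      exact mem_iUnion.mpr ⟨i.castSucc, hi⟩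
    · exact mem_iUnion.mpr ⟨Fin.last n, hxn, hx.2⟩

section PiecewiseAffine

variable {F : ℝ → ℝ} {t : ℕ → ℝ} {n : ℕ}

theorem aemeasurable_restrict_Ico_of_piecewise_affine
    (haff : ∀ i < n, ∃ c s : ℝ, s ≠ 0 ∧ ∀ x ∈ Ico (t i) (t (i + 1)), F x = c + s * x) :
    AEMeasurable F (volume.restrict (Ico (t 0) (t n))) := by
  refine AEMeasurable.mono_measure ?_
    (Measure.restrict_mono (Ico_subset_iUnion_Ico_succ t n) le_rfl)
  refine AEMeasurable.iUnion fun i => ?_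
  obtain ⟨c, s, -, hF⟩ := haff i i.isLt
  exact (measurable_const.add (measurable_id.const_mul s)).aemeasurable.congr
    ((ae_restrict_mem measurableSet_Ico).mono fun x hx => (hF x hx).symm)

theorem nullSingletonClass_map_restrict_Ico_of_piecewise_affine
    (haff : ∀ i < n, ∃ c s : ℝ, s ≠ 0 ∧ ∀ x ∈ Ico (t i) (t (i + 1)), F x = c + s * x) :
    NullSingletonClass ((volume.restrict (Ico (t 0) (t n))).map F) := by
  refine ⟨fun y => ?_⟩
  rw [Measure.map_apply_of_aemeasurable (aemeasurable_restrict_Ico_of_piecewise_affine haff)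
    (measurableSet_singleton y), Measure.restrict_apply' measurableSet_Ico]
  refine measure_mono_null (inter_subset_inter_right _ (Ico_subset_iUnion_Ico_succ t n)) ?_
  rw [inter_iUnion]
  refine measure_iUnion_null fun i => Set.Subsingleton.measure_zero ?_ _
  obtain ⟨c, s, hs, hF⟩ := haff i i.isLt
  rintro x ⟨hxy, hx⟩ x' ⟨hx'y, hx'⟩
  have : c + s * x = c + s * x' := by
    rw [← hF x hx, ← hF x' hx']
    exact hxy.trans hx'y.symm
  exact mul_left_cancel₀ hs (add_left_cancel this)

end PiecewiseAffine

namespace ProbabilityTheory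

variable (μ : Measure ℝ) [IsProbabilityMeasure μ] [NullSingletonClass μ]

theorem continuous_cdf : Continuous (cdf μ) := by
  refine continuous_iff_continuousAt.mpr fun x => continuousAt_iff_continuous_left_right.mpr
    ⟨?_, (cdf μ).right_continuous x⟩
  rw [continuousWithinAt_Iio_iff_Iic.symm, (monotone_cdf μ).continuousWithinAt_Iio_iff_leftLim_eq]
  have hx := (cdf μ).measure_singleton x
  rw [measure_cdf, measure_singleton, eq_comm, ENNReal.ofReal_eq_zero, sub_nonpos] at hx
  exact le_antisymm ((monotone_cdf μ).leftLim_le le_rfl) hx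

theorem measure_cdf_preimage_Iic {u : ℝ} (hu : u ∈ Ico 0 1) :
    μ (cdf μ ⁻¹' Iic u) = ENNReal.ofReal u := by
  set S := cdf μ ⁻¹' Iic u
  rcases S.eq_empty_or_nonempty with hS | hne
  · obtain rfl : u = 0 := by
      refine le_antisymm (not_lt.mp fun hu0 => ?_) hu.1
      obtain ⟨x, hx⟩ := ((tendsto_cdf_atBot μ).eventually (gt_mem_nhds hu0)).exists
      exact hS.subset (show x ∈ S from hx.le)
    simp [hS]
  have hbdd : BddAbove S := by
    obtain ⟨N, hN⟩ := eventually_atTop.mp ((tendsto_cdf_atTop μ).eventually (lt_mem_nhds hu.2))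
    exact ⟨N, fun y hy => not_lt.mp fun hNy => (hN y hNy.le).not_ge hy⟩
  have hclosed : IsClosed S := isClosed_Iic.preimage (continuous_cdf μ)
  have hlower : IsLowerSet S := fun _ _ hxy hy => ((monotone_cdf μ) hxy).trans hy
  set b := sSup S
  have hb : cdf μ b = u := by
    refine le_antisymm (hclosed.csSup_mem hne hbdd) (not_lt.mp fun hbu => ?_)
    have hnear : ∀ᶠ y in 𝓝[>] b, y ∈ S :=
      ((((continuous_cdf μ).tendsto b).eventually (gt_mem_nhds hbu)).filter_mono
        nhdsWithin_le_nhds).mono fun _ hy => hy.le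
    obtain ⟨y, hyS, hby⟩ := (hnear.and self_mem_nhdsWithin).exists
    exact (le_csSup hbdd hyS).not_gt hby
  rw [hclosed.eq_Iic_csSup_of_isLowerSet hlower hne hbdd, ← ofReal_cdf, hb]

theorem map_cdf_eq_restrict_Ico : μ.map (cdf μ) = volume.restrict (Ico 0 1) := by
  refine Measure.ext_of_Iic _ _ fun u => ?_
  rw [Measure.map_apply (monotone_cdf μ).measurable measurableSet_Iic,
    Measure.restrict_apply measurableSet_Iic]
  rcases lt_or_ge u 0 with hu0 | hu0
  · have hpre : cdf μ ⁻¹' Iic u = ∅ :=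
      eq_empty_of_forall_notMem fun x hx => (cdf_nonneg μ x).not_gt (lt_of_le_of_lt hx hu0)
    have hinter : Iic u ∩ Ico 0 1 = ∅ :=
      eq_empty_of_forall_notMem fun x hx => (lt_of_le_of_lt hx.1 hu0).not_ge hx.2.1
    rw [hpre, hinter, measure_empty, measure_empty]
  rcases lt_or_ge u 1 with hu1 | hu1
  · have : Iic u ∩ Ico 0 1 = Icc 0 u := by
      ext x
      exact ⟨fun h => ⟨h.2.1, h.1⟩, fun h => ⟨h.2, h.1, h.2.trans_lt hu1⟩⟩
    rw [measure_cdf_preimage_Iic μ ⟨hu0, hu1⟩, this, Real.volume_Icc, sub_zero]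
  · have : cdf μ ⁻¹' Iic u = univ :=
      eq_univ_of_forall fun x => (cdf_le_one μ x).trans hu1
    rw [this, inter_eq_right.mpr fun x hx => hx.2.le.trans hu1]
    simp

theorem cdf_eq_toReal_measure_Ioo (h0 : μ (Iio 0) = 0) (y : ℝ) :
    cdf μ y = (μ (Ioo 0 y)).toReal := by
  have hIic : μ (Iic (0 : ℝ)) = 0 := by rw [← measure_congr Iio_ae_eq_Iic, h0]
  rw [cdf_eq_real, measureReal_def]
  congr 1
  refine le_antisymm ?_ (measure_mono fun x hx => hx.2.le)
  calc μ (Iic y) ≤ μ (Iic 0 ∪ Ioc 0 y) := measure_mono fun x hx => by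
          rcases le_or_gt x 0 with h | h
          exacts [Or.inl h, Or.inr ⟨h, hx⟩]
    _ ≤ μ (Iic 0) + μ (Ioc 0 y) := measure_union_le _ _
    _ = μ (Ioo 0 y) := by rw [hIic, zero_add, measure_congr Ioo_ae_eq_Ioc]

end ProbabilityTheory

instance Real.isProbabilityMeasure_restrict_Ico_zero_one :
    IsProbabilityMeasure (volume.restrict (Ico (0 : ℝ) 1)) :=
  ⟨by simp⟩

theorem eqOn_cdf_map_restrict_Ico {F h : ℝ → ℝ} (hmaps : MapsTo F (Ico 0 1) (Ico 0 1))
    (hF : AEMeasurable F (volume.restrict (Ico 0 1)))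
    [NullSingletonClass ((volume.restrict (Ico 0 1)).map F)] (hh0 : h 0 = 0)
    (hhdef : ∀ x ∈ Ioc (0 : ℝ) 1, h x = (volume (Ico 0 1 ∩ F ⁻¹' Ioo 0 x)).toReal) :
    EqOn h (cdf ((volume.restrict (Ico 0 1)).map F)) (Ico 0 1) := by
  set ν := (volume.restrict (Ico (0 : ℝ) 1)).map F
  have : IsProbabilityMeasure ν := Measure.isProbabilityMeasure_map hF
  have hν : ∀ B, MeasurableSet B → ν B = volume (Ico 0 1 ∩ F ⁻¹' B) := fun B hB => by
    rw [Measure.map_apply_of_aemeasurable hF hB, Measure.restrict_apply' measurableSet_Ico,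
      inter_comm]
  have hν0 : ν (Iio 0) = 0 := by
    have hempty : Ico 0 1 ∩ F ⁻¹' Iio 0 = ∅ :=
      eq_empty_of_forall_notMem fun x hx => (hmaps hx.1).1.not_gt hx.2
    rw [hν _ measurableSet_Iio, hempty, measure_empty]
  intro y hy
  rw [cdf_eq_toReal_measure_Ioo ν hν0]
  rcases hy.1.eq_or_lt with rfl | hpos
  · simp [hh0]
  · rw [hhdef y ⟨hpos, hy.2.le⟩, hν _ measurableSet_Ioo]

theorem stmt6_outer_composition_measure_preserving_general
    (F : ℝ → ℝ) (hmaps : MapsTo F (Ico (0:ℝ) 1) (Ico (0:ℝ) 1))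
    (n : ℕ) (t : ℕ → ℝ) (ht0 : t 0 = 0) (htn : t n = 1)
    (haff : ∀ i < n, ∃ c s : ℝ, s ≠ 0 ∧
      ∀ x ∈ Ico (t i) (t (i + 1)), F x = c + s * x)
    (h : ℝ → ℝ) (hh0 : h 0 = 0)
    (hhdef : ∀ x ∈ Ioc (0:ℝ) 1,
      h x = (volume (Ico (0:ℝ) 1 ∩ F ⁻¹' (Ioo (0:ℝ) x))).toReal) :
    ∀ A : Set ℝ, A ⊆ Ico (0:ℝ) 1 → MeasurableSet A →
      volume (Ico (0:ℝ) 1 ∩ (h ∘ F) ⁻¹' A) = volume A := by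
  intro A hA hAm
  set μ := volume.restrict (Ico (0:ℝ) 1)
  have hF : AEMeasurable F μ := by
    simpa only [ht0, htn] using aemeasurable_restrict_Ico_of_piecewise_affine haff
  have : NullSingletonClass (μ.map F) := by
    simpa only [ht0, htn] using nullSingletonClass_map_restrict_Ico_of_piecewise_affine haff
  set ν := μ.map F
  have : IsProbabilityMeasure ν := Measure.isProbabilityMeasure_map hF
  have hG : EqOn (h ∘ F) (cdf ν ∘ F) (Ico 0 1) := fun x hx =>
    eqOn_cdf_map_restrict_Ico hmaps hF hh0 hhdef (hmaps hx)
  have hcdf : Measurable (cdf ν) := (monotone_cdf ν).measurable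
  calc volume (Ico 0 1 ∩ (h ∘ F) ⁻¹' A) = μ ((cdf ν ∘ F) ⁻¹' A) := by
        rw [hG.inter_preimage_eq, Measure.restrict_apply' measurableSet_Ico, inter_comm]
    _ = (ν.map (cdf ν)) A := by
        rw [AEMeasurable.map_map_of_aemeasurable hcdf.aemeasurable hF,
          Measure.map_apply_of_aemeasurable (hcdf.comp_aemeasurable hF) hAm]
    _ = volume A := by
        rw [map_cdf_eq_restrict_Ico, Measure.restrict_apply hAm, inter_eq_left.mpr hA]

/-- Let `F : [0,1) → [0,1)` be a surjective piecewise affine map with nonzero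
slopes (not necessarily measure preserving), and let `h` be its outer map,
`h 0 = 0`, `h x = λ(F⁻¹((0,x)))` for `x ∈ (0,1]`. Then `G = h ∘ F` preserves
Lebesgue measure on `[0,1)`. -/
theorem stmt6_outer_composition_measure_preserving
    (F : ℝ → ℝ) (hmaps : MapsTo F (Ico (0:ℝ) 1) (Ico (0:ℝ) 1))
    (hsurj : SurjOn F (Ico (0:ℝ) 1) (Ico (0:ℝ) 1))
    (n : ℕ) (hn : 0 < n) (t : ℕ → ℝ) (ht0 : t 0 = 0) (htn : t n = 1)
    (htmono : StrictMonoOn t (Iic n))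
    (haff : ∀ i < n, ∃ c s : ℝ, s ≠ 0 ∧
      ∀ x ∈ Ico (t i) (t (i + 1)), F x = c + s * x)
    (h : ℝ → ℝ) (hh0 : h 0 = 0)
    (hhdef : ∀ x ∈ Ioc (0:ℝ) 1,
      h x = (volume (Ico (0:ℝ) 1 ∩ F ⁻¹' (Ioo (0:ℝ) x))).toReal) :
    ∀ A : Set ℝ, A ⊆ Ico (0:ℝ) 1 → MeasurableSet A →
      volume (Ico (0:ℝ) 1 ∩ (h ∘ F) ⁻¹' A) = volume A :=
  stmt6_outer_composition_measure_preserving_general F hmaps n t ht0 htn haff h hh0 hhdef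
end

section
/- Let X be a compact metric space, τ : X → X continuous, and {I_s}_{s≥0} a sequence of nonempty closed sets with τ(I_s) ⊇ I_{s+1} for all s. Let {x_s} be a sequence in X such that diam(I_s ∪ {x_s}) < ε for all s and diam(I_s ∪ {x_s}) → 0 as s → ∞. Then there exists z ∈ X with d(τˢ(z), x_s) < ε for all s ≥ 0 and d(τˢ(z), x_s) → 0 as s → ∞. -/
open Filter Topology

/-- If `τ` is a continuous self-map of a compact metric space, `{I_s}` nonempty
closed sets with `τ(I_s) ⊇ I_{s+1}`, and `{x_s}` a sequence with
`diam(I_s ∪ {x_s}) < ε` for all `s` and `diam(I_s ∪ {x_s}) → 0`, then there is a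
point `z` that `ε`-traces and asymptotically traces `{x_s}`. -/
theorem stmt18_trace_and_limit_trace
    {X : Type*} [MetricSpace X] [CompactSpace X]
    (τ : X → X) (hτ : Continuous τ) (ε : ℝ)
    (I : ℕ → Set X) (hIne : ∀ s, (I s).Nonempty) (hIcl : ∀ s, IsClosed (I s))
    (hIcov : ∀ s, I (s + 1) ⊆ τ '' I s)
    (x : ℕ → X)
    (hdiam : ∀ s, Metric.diam (I s ∪ {x s}) < ε)
    (hlim : Tendsto (fun s => Metric.diam (I s ∪ {x s})) atTop (𝓝 0)) :
    ∃ z : X, (∀ s : ℕ, dist (τ^[s] z) (x s) < ε) ∧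
      Tendsto (fun s => dist (τ^[s] z) (x s)) atTop (𝓝 0) := by
  -- Key: find z with τ^[s] z ∈ I s for all s.
  have key : ∀ m n : ℕ, ∃ z, ∀ k ≤ m, τ^[k] z ∈ I (n + k) := by
    intro m
    induction m with
    | zero =>
      intro n
      obtain ⟨z, hz⟩ := hIne n
      exact ⟨z, fun k hk => by simp [Nat.le_zero.mp hk, hz]⟩
    | succ m ih =>
      intro n
      obtain ⟨z', hz'⟩ := ih (n + 1)
      obtain ⟨z, hz, hτz⟩ := hIcov n (hz' 0 (Nat.zero_le _))
      refine ⟨z, fun k hk => ?_⟩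
      cases k with
      | zero => simpa using hz
      | succ k =>
        have : τ^[k + 1] z = τ^[k] z' := by
          simp [Function.iterate_succ_apply, hτz]
        rw [this]
        have := hz' k (Nat.le_of_succ_le_succ hk)
        convert this using 2
        omega
  set K : ℕ → Set X := fun n => {z | ∀ k ≤ n, τ^[k] z ∈ I k} with hK
  have hKne : ∀ n, (K n).Nonempty := by
    intro n
    obtain ⟨z, hz⟩ := key n 0
    exact ⟨z, fun k hk => by simpa using hz k hk⟩
  have hKcl : ∀ n, IsClosed (K n) := by
    intro n
    have : K n = ⋂ k ∈ Set.Iic n, (τ^[k]) ⁻¹' (I k) := by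
      ext z; simp [hK, Set.mem_iInter]
    rw [this]
    exact isClosed_biInter fun k _ => (hIcl k).preimage (hτ.iterate k)
  have hKmono : ∀ n, K (n + 1) ⊆ K n := fun n z hz k hk => hz k (hk.trans (Nat.le_succ n))
  have hclosed : (⋂ n, K n).Nonempty := by
    apply IsCompact.nonempty_iInter_of_sequence_nonempty_isCompact_isClosed K hKmono hKne
    · exact (hKcl 0).isCompact
    · exact hKcl
  obtain ⟨z, hz⟩ := hclosed
  have hzI : ∀ s, τ^[s] z ∈ I s := fun s =>
    (Set.mem_iInter.mp hz s) s le_rfl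
  have hdle : ∀ s, dist (τ^[s] z) (x s) ≤ Metric.diam (I s ∪ {x s}) := by
    intro s
    refine Metric.dist_le_diam_of_mem ?_ (Set.mem_union_left _ (hzI s))
      (Set.mem_union_right _ rfl)
    exact (isCompact_univ.isBounded).subset (Set.subset_univ _)
  refine ⟨z, fun s => lt_of_le_of_lt (hdle s) (hdiam s), ?_⟩
  exact squeeze_zero (fun s => dist_nonneg) hdle hlim
end
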